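/- Let V be a rational representation of G, let q be the smallest positive integer k such that N(u) ⊆ k·N(I) for every nonzero u ∈ V (weight polytopes taken with respect to the diagonal torus T). Then q·w_λ(I) ≤ w_λ(u) for every one-parameter subgroup λ of G and every nonzero u ∈ V. -/

import Mathlib

open Filter Topology Matrix Set Pointwise

noncomputable section

/-- Quotient topology on the projectivization of a topological vector space. -/
instance projTop (K V : Type*) [DivisionRing K] [AddCommGroup V] [Module K V]
    [TopologicalSpace V] : TopologicalSpace (Projectivization K V) :=
  inferInstanceAs (TopologicalSpace (Quotient (projectivizationSetoid K V)))

/-- The group `G = SL(N+1, ℂ)`. -/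
abbrev SL (N : ℕ) := Matrix.SpecialLinearGroup (Fin (N + 1)) ℂ

/-- A representation `ρ` of `SL(N+1,ℂ)` is rational if every matrix coefficient
`σ ↦ α (ρ σ v)` is a polynomial function of the entries of `σ`. -/
def IsRational {N : ℕ} {V : Type*} [AddCommGroup V] [Module ℂ V]
    (ρ : SL N →* (V ≃ₗ[ℂ] V)) : Prop :=
  ∀ (α : V →ₗ[ℂ] ℂ) (v : V), ∃ p : MvPolynomial (Fin (N + 1) × Fin (N + 1)) ℂ,
    ∀ σ : SL N, α (ρ σ v) =
      MvPolynomial.eval (fun ij => (σ : Matrix (Fin (N + 1)) (Fin (N + 1)) ℂ) ij.1 ij.2) p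

/-- A homomorphism `ℂ* → SL(N+1,ℂ)` is a one-parameter subgroup if each matrix
entry is a Laurent polynomial in `t`. -/
def IsOneParam {N : ℕ} (lam : ℂˣ →* SL N) : Prop :=
  ∀ i j : Fin (N + 1), ∃ c : ℤ →₀ ℂ, ∀ t : ℂˣ,
    ((lam t : Matrix (Fin (N + 1)) (Fin (N + 1)) ℂ)) i j = ∑ n ∈ c.support, c n * (t : ℂ) ^ n

/-- The filter of punctured neighborhoods of `0 ∈ ℂ`, pulled back to `ℂˣ`:
"`t → 0`, `t ∈ ℂ*`". -/
def zeroFilter : Filter ℂˣ := comap Units.val (𝓝[≠] (0 : ℂ))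

/-- `w` is a weight of `v` w.r.t. the one-parameter family `lam`:
`t^{-w} • ρ(lam t) v` has a nonzero limit as `t → 0`. -/
def HasWeight {N : ℕ} {V : Type*} [NormedAddCommGroup V] [NormedSpace ℂ V]
    (ρ : SL N →* (V ≃ₗ[ℂ] V)) (lam : ℂˣ → SL N) (v : V) (w : ℤ) : Prop :=
  ∃ v₀ : V, v₀ ≠ 0 ∧
    Tendsto (fun t : ℂˣ => ((t : ℂ) ^ (-w)) • (ρ (lam t) v)) zeroFilter (𝓝 v₀)

/-- `w` is the weight of the identity matrix `I ∈ gl(N+1,ℂ)` w.r.t. `lam`, for the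
representation of `SL(N+1,ℂ)` on `gl(N+1,ℂ)` given by left multiplication
(so `ρ(σ) I = σ`). -/
def HasWeightI {N : ℕ} (lam : ℂˣ → SL N) (w : ℤ) : Prop :=
  ∃ M₀ : Matrix (Fin (N + 1)) (Fin (N + 1)) ℂ, M₀ ≠ 0 ∧
    Tendsto (fun t : ℂˣ => ((t : ℂ) ^ (-w)) • ((lam t : Matrix (Fin (N + 1)) (Fin (N + 1)) ℂ)))
      zeroFilter (𝓝 M₀)

/-- K-semistability of a pair `(v, w)`: `w_λ(w) ≤ w_λ(v)` for all one-parameter subgroups. -/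
def KSemistable {N : ℕ} {V W : Type*} [NormedAddCommGroup V] [NormedSpace ℂ V]
    [NormedAddCommGroup W] [NormedSpace ℂ W]
    (ρV : SL N →* (V ≃ₗ[ℂ] V)) (ρW : SL N →* (W ≃ₗ[ℂ] W)) (v : V) (w : W) : Prop :=
  ∀ lam : ℂˣ →* SL N, IsOneParam lam →
    ∀ a b : ℤ, HasWeight ρW (fun t => lam t) w a → HasWeight ρV (fun t => lam t) v b → a ≤ b

/-- `q = deg(V)`: the least positive integer `q` with `q·w_λ(I) ≤ w_λ(u)` for all `u ≠ 0`
and all one-parameter subgroups `λ`. -/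
def IsDeg {N : ℕ} {V : Type*} [NormedAddCommGroup V] [NormedSpace ℂ V]
    (ρV : SL N →* (V ≃ₗ[ℂ] V)) (q : ℕ) : Prop :=
  IsLeast {k : ℕ | 0 < k ∧ ∀ lam : ℂˣ →* SL N, IsOneParam lam →
    ∀ u : V, u ≠ 0 → ∀ wI wu : ℤ, HasWeightI (fun t => lam t) wI →
      HasWeight ρV (fun t => lam t) u wu → (k : ℤ) * wI ≤ wu} q

/-- K-stability of a pair `(v, w)`, where `q = deg(V)`. -/
def KStable {N : ℕ} {V W : Type*} [NormedAddCommGroup V] [NormedSpace ℂ V]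
    [NormedAddCommGroup W] [NormedSpace ℂ W]
    (ρV : SL N →* (V ≃ₗ[ℂ] V)) (ρW : SL N →* (W ≃ₗ[ℂ] W)) (v : V) (w : W) (q : ℕ) : Prop :=
  KSemistable ρV ρW v w ∧
  ∀ lam : ℂˣ →* SL N, IsOneParam lam → ∀ wI wv ww : ℤ,
    HasWeightI (fun t => lam t) wI → HasWeight ρV (fun t => lam t) v wv →
    HasWeight ρW (fun t => lam t) w ww → (q : ℤ) * wI < wv → ww < wv

/-- Uniform K-stability of a pair `(v, w)`, where `q = deg(V)`:
`m (w_λ(v) − w_λ(w)) ≥ w_λ(v) − q·w_λ(I)` for some `m > 0` and all `λ`. -/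
def KUniform {N : ℕ} {V W : Type*} [NormedAddCommGroup V] [NormedSpace ℂ V]
    [NormedAddCommGroup W] [NormedSpace ℂ W]
    (ρV : SL N →* (V ≃ₗ[ℂ] V)) (ρW : SL N →* (W ≃ₗ[ℂ] W)) (v : V) (w : W) (q : ℕ) : Prop :=
  ∃ m : ℕ, 0 < m ∧ ∀ lam : ℂˣ →* SL N, IsOneParam lam → ∀ wI wv ww : ℤ,
    HasWeightI (fun t => lam t) wI → HasWeight ρV (fun t => lam t) v wv →
    HasWeight ρW (fun t => lam t) w ww →
    (m : ℤ) * (wv - ww) ≥ wv - (q : ℤ) * wI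

/-- The element `diag(t₁, …, t_N, (t₁⋯t_N)⁻¹)` of the diagonal maximal torus of `SL(N+1,ℂ)`. -/
def torusElem (N : ℕ) (t : Fin N → ℂˣ) : SL N :=
  ⟨Matrix.diagonal (Fin.snoc (fun i => (t i : ℂ)) ((∏ i, (t i : ℂ))⁻¹)), by
    rw [Matrix.det_diagonal, Fin.prod_univ_castSucc]
    simp only [Fin.snoc_castSucc, Fin.snoc_last]
    exact mul_inv_cancel₀ (Finset.prod_ne_zero_iff.mpr fun i _ => (t i).ne_zero)⟩

/-- `A(u)`: the set of torus weights appearing in `u`, given the weight space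
projections `π` and the weight set `A`. -/
def wtSupp {N : ℕ} {V : Type*} [AddCommGroup V] [Module ℂ V] (A : Finset (Fin N → ℤ))
    (π : (Fin N → ℤ) → (V →ₗ[ℂ] V)) (u : V) : Set (Fin N → ℤ) :=
  {a | a ∈ A ∧ π a u ≠ 0}

/-- The weight polytope `N(u) ⊆ ℝ^N`: the convex hull of `A(u)`. -/
def wtPolytope {N : ℕ} {V : Type*} [AddCommGroup V] [Module ℂ V] (A : Finset (Fin N → ℤ))
    (π : (Fin N → ℤ) → (V →ₗ[ℂ] V)) (u : V) : Set (Fin N → ℝ) :=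
  convexHull ℝ ((fun a : Fin N → ℤ => fun i => (a i : ℝ)) '' wtSupp A π u)

/-- `N(I) = conv{e₁, …, e_N, −(e₁+⋯+e_N)} ⊆ ℝ^N`, the weight polytope of the identity
matrix for the left multiplication action on `gl(N+1,ℂ)`. -/
def simplexNI (N : ℕ) : Set (Fin N → ℝ) :=
  convexHull ℝ (insert (fun _ => (-1 : ℝ)) (Set.range fun i : Fin N => Pi.single i (1 : ℝ)))

/-- `(A, π)` is a weight decomposition of the representation `ρ` with respect to the
diagonal maximal torus of `SL(N+1,ℂ)`. -/
def IsWtDecomp {N : ℕ} {V : Type*} [NormedAddCommGroup V] [NormedSpace ℂ V]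
    (ρ : SL N →* (V ≃ₗ[ℂ] V)) (A : Finset (Fin N → ℤ))
    (π : (Fin N → ℤ) → (V →ₗ[ℂ] V)) : Prop :=
  (∀ u : V, ∑ a ∈ A, π a u = u) ∧
  ∀ a ∈ A, ∀ (t : Fin N → ℂˣ) (u : V),
    ρ (torusElem N t) (π a u) = (∏ i, (t i : ℂ) ^ (a i)) • π a u

/-- `(A, π)` is a weight decomposition of a linear action `ρ` of the torus `(ℂ*)^N`. -/
def IsWtDecompT {N : ℕ} {V : Type*} [AddCommGroup V] [Module ℂ V]
    (ρ : (Fin N → ℂˣ) →* (V ≃ₗ[ℂ] V)) (A : Finset (Fin N → ℤ))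
    (π : (Fin N → ℤ) → (V →ₗ[ℂ] V)) : Prop :=
  (∀ u : V, ∑ a ∈ A, π a u = u) ∧
  ∀ a ∈ A, ∀ (t : Fin N → ℂˣ) (u : V), ρ t (π a u) = (∏ i, (t i : ℂ) ^ (a i)) • π a u

/-- The torus weight `w_{λ_ℓ}(u) = min { ⟨ℓ, a⟩ : a ∈ A(u) }`. -/
def wtT {N : ℕ} {V : Type*} [AddCommGroup V] [Module ℂ V] (A : Finset (Fin N → ℤ))
    (π : (Fin N → ℤ) → (V →ₗ[ℂ] V)) (ℓ : Fin N → ℤ) (u : V) : ℤ :=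
  sInf ((fun a : Fin N → ℤ => ∑ i, ℓ i * a i) '' wtSupp A π u)

/-- `w_{λ_ℓ}(I) = min {ℓ₁, …, ℓ_N, −(ℓ₁+⋯+ℓ_N)}`. -/
def wIT {N : ℕ} (ℓ : Fin N → ℤ) : ℤ := sInf (insert (-(∑ i, ℓ i)) (Set.range ℓ))

/-- The support function of a set `P ⊆ ℝ^N`. -/
def suppFn {N : ℕ} (P : Set (Fin N → ℝ)) (x : Fin N → ℝ) : ℝ :=
  sSup ((fun y => ∑ i, x i * y i) '' P)

/-- The squared Hilbert–Schmidt norm of `σ ∈ SL(N+1,ℂ) ⊆ gl(N+1,ℂ)`. -/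
def hsNormSq {N : ℕ} (σ : SL N) : ℝ :=
  ∑ i, ∑ j, ‖(σ : Matrix (Fin (N + 1)) (Fin (N + 1)) ℂ) i j‖ ^ 2

/-- Paul's functional `p_{v,w}(σ) = log‖ρ_W(σ)w‖² − log‖ρ_V(σ)v‖²`. -/
def pFun {N : ℕ} {V W : Type*} [NormedAddCommGroup V] [InnerProductSpace ℂ V]
    [NormedAddCommGroup W] [InnerProductSpace ℂ W]
    (ρV : SL N →* (V ≃ₗ[ℂ] V)) (ρW : SL N →* (W ≃ₗ[ℂ] W)) (v : V) (w : W) (σ : SL N) : ℝ :=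
  Real.log (‖ρW σ w‖ ^ 2) - Real.log (‖ρV σ v‖ ^ 2)

/-!
A one-parameter subgroup is a Laurent polynomial `λ(t) = ∑ₖ tᵏ Aₖ`, and multiplicativity of `λ`
forces the coefficients `Aₖ` to be complete orthogonal idempotents. Hence `λ` is conjugate, by some
`g ∈ SL(N+1,ℂ)`, to the torus subgroup `t ↦ diag(t^ℓ₁, …, t^ℓ_N, t^(-∑ ℓᵢ))`. Conjugating the
limit defining `w_λ(I)` by `g` shows `w_λ(I) ≤ ℓᵢ` and `w_λ(I) ≤ -∑ ℓᵢ`. On the other hand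
`ρ(λ(t)) u = ∑ₐ t^⟨ℓ,a⟩ ρ(g) (ρ(g⁻¹) u)ₐ`, so `w_λ(u)` is at least `⟨ℓ,a⟩` for some weight `a` of
`ρ(g⁻¹) u`. Such an `a` lies in `q • N(I)`, on which `⟨ℓ,·⟩` is bounded below by `q` times its
minimum over the vertices of `N(I)`, that is by `q · w_λ(I)`.
-/

lemma prod_zpow_eq_zpow_sum₀ {ι G₀ : Type*} [CommGroupWithZero G₀] (s : Finset ι) (f : ι → ℤ)
    {a : G₀} (ha : a ≠ 0) : ∏ i ∈ s, a ^ f i = a ^ ∑ i ∈ s, f i :=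
  Finset.cons_induction (by simp) (fun _ _ _ _ ↦ by simp [Finset.prod_cons, Finset.sum_cons,
    zpow_add₀ ha, *]) s

lemma two_zpow_injective : Function.Injective fun k : ℤ => (2 : ℂ) ^ k := by
  intro k k' h
  have h' : (2 : ℝ) ^ k = (2 : ℝ) ^ k' := by
    simpa only [norm_zpow, Complex.norm_two] using congrArg norm h
  exact zpow_right_injective₀ (by norm_num) (by norm_num) h'

def zpowChar (k : ℤ) : ℂˣ →* ℂ := (Units.coeHom ℂ).comp (zpowGroupHom k)

lemma zpowChar_apply (k : ℤ) (t : ℂˣ) : zpowChar k t = (t : ℂ) ^ k := by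
  simp [zpowChar]

lemma linearIndependent_zpow : LinearIndependent ℂ fun k : ℤ => fun t : ℂˣ => (t : ℂ) ^ k := by
  have hinj : Function.Injective zpowChar := fun k k' h => two_zpow_injective <| by
    simpa [zpowChar_apply] using DFunLike.congr_fun h (Units.mk0 2 two_ne_zero)
  have heq : (fun k : ℤ => fun t : ℂˣ => (t : ℂ) ^ k) = (fun f : ℂˣ →* ℂ => ⇑f) ∘ zpowChar := by
    funext k t
    simp [zpowChar_apply]
  rw [heq]
  exact (linearIndependent_monoidHom ℂˣ ℂ).comp zpowChar hinj

lemma eq_zero_of_forall_sum_zpow_smul_eq_zero {M : Type*} [AddCommGroup M] [Module ℂ M]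
    {s : Finset ℤ} {v : ℤ → M} (h : ∀ t : ℂˣ, ∑ k ∈ s, (t : ℂ) ^ k • v k = 0) {k : ℤ}
    (hk : k ∈ s) : v k = 0 := by
  refine (Module.forall_dual_apply_eq_zero_iff ℂ (v k)).mp fun φ => ?_
  refine linearIndependent_iff'.mp linearIndependent_zpow s (fun k => φ (v k)) ?_ k hk
  funext t
  simpa [map_sum, mul_comm] using congrArg φ (h t)

lemma MonoidHom.completeOrthogonalIdempotents_of_eq_sum_zpow_smul {R : Type*} [Ring R] [Algebra ℂ R]
    (f : ℂˣ →* R) (s : Finset ℤ) (A : ℤ → R) (hf : ∀ t, f t = ∑ k ∈ s, (t : ℂ) ^ k • A k) :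
    CompleteOrthogonalIdempotents fun k : s => A k := by
  -- compare coefficients in `f (t * t') = f t * f t'`, first in `t'`, then in `t`
  have hcoeff : ∀ (t : ℂˣ), ∀ k ∈ s, ∑ m ∈ s, (t : ℂ) ^ m • (A m * A k) = (t : ℂ) ^ k • A k := by
    intro t k hk
    refine sub_eq_zero.mp (eq_zero_of_forall_sum_zpow_smul_eq_zero
      (v := fun k => ∑ m ∈ s, (t : ℂ) ^ m • (A m * A k) - (t : ℂ) ^ k • A k) (fun t' => ?_) hk)
    have hmul := map_mul f t t'
    rw [hf, hf, hf, Finset.sum_mul_sum, Finset.sum_comm] at hmul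
    simp only [smul_mul_smul_comm, Units.val_mul, mul_zpow] at hmul
    simp only [smul_sub, Finset.sum_sub_distrib, sub_eq_zero, Finset.smul_sum, smul_smul, mul_comm]
    exact hmul.symm
  have hmul : ∀ m ∈ s, ∀ k ∈ s, A m * A k = if m = k then A k else 0 := by
    intro m hm k hk
    refine sub_eq_zero.mp (eq_zero_of_forall_sum_zpow_smul_eq_zero
      (v := fun m => A m * A k - if m = k then A k else 0) (fun t => ?_) hm)
    simp only [smul_sub, Finset.sum_sub_distrib, hcoeff t k hk, smul_ite, smul_zero,
      Finset.sum_ite_eq', if_pos hk, sub_self]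
  refine ⟨⟨fun k => ?_, fun i j hij => ?_⟩, ?_⟩
  · exact (hmul k k.2 k k.2).trans (if_pos rfl)
  · simpa [Subtype.val_injective.ne hij] using hmul i i.2 j j.2
  · simpa [Finset.sum_attach s A] using (hf 1).symm

lemma CompleteOrthogonalIdempotents.isInternal_range {R M I : Type*} [Ring R] [AddCommGroup M]
    [Module R M] [Fintype I] [DecidableEq I] {e : I → Module.End R M}
    (he : CompleteOrthogonalIdempotents e) :
    DirectSum.IsInternal fun i => LinearMap.range (e i) := by
  refine DirectSum.isInternal_submodule_of_iSupIndep_of_iSup_eq_top ?_ ?_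
  · refine iSupIndep_def.mpr fun i => Submodule.disjoint_def.mpr ?_
    rintro _ ⟨y, rfl⟩ hy
    have hker : (⨆ j, ⨆ (_ : j ≠ i), LinearMap.range (e j)) ≤ LinearMap.ker (e i) :=
      iSup₂_le fun j hj => LinearMap.range_le_ker_iff.mpr (he.ortho hj.symm)
    simpa [← Module.End.mul_apply, (he.idem i).eq] using hker hy
  · refine eq_top_iff.mpr fun x _ => ?_
    have hx : ∑ i, e i x = x := by simp [← LinearMap.sum_apply, he.complete]
    exact hx ▸ Submodule.sum_mem_iSup fun i => LinearMap.mem_range_self (e i) x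

lemma Matrix.exists_mul_eq_mul_diagonal_of_completeOrthogonalIdempotents {n I K : Type*}
    [Fintype n] [DecidableEq n] [Fintype I] [DecidableEq I] [Field K] {E : I → Matrix n n K}
    (hE : CompleteOrthogonalIdempotents E) :
    ∃ (P : Matrix n n K) (κ : n → I), IsUnit P.det ∧
      ∀ i, E i * P = P * diagonal fun j => if κ j = i then 1 else 0 := by
  have hint := (hE.map (Matrix.toLinAlgEquiv' : Matrix n n K ≃ₐ[K] _).toRingHom).isInternal_range
  let b₀ := hint.collectedBasis fun i => Module.finBasis K _
  let σ := b₀.indexEquiv (Pi.basisFun K n)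
  let b := b₀.reindex σ
  have hb : ∀ j, b j ∈ LinearMap.range (Matrix.toLin' (E (σ.symm j).1)) := fun j => by
    rw [Module.Basis.reindex_apply]
    exact hint.collectedBasis_mem _ (σ.symm j)
  refine ⟨(Pi.basisFun K n).toMatrix b, fun j => (σ.symm j).1, ?_, fun i => ?_⟩
  · have := (Pi.basisFun K n).invertibleToMatrix b
    exact isUnit_det_of_invertible _
  ext r c
  obtain ⟨y, hy⟩ := hb c
  have hcol : E i *ᵥ b c = if (σ.symm c).1 = i then b c else 0 := by
    rw [← hy, Matrix.toLin'_apply, Matrix.mulVec_mulVec]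
    split_ifs with h
    · rw [← h, (hE.idem _).eq]
    · rw [hE.ortho (Ne.symm h), Matrix.zero_mulVec]
  have hentry := congrFun hcol r
  rw [Matrix.mul_diagonal, Matrix.mul_apply]
  simp only [Module.Basis.toMatrix_apply, Pi.basisFun_repr]
  simp only [Matrix.mulVec, dotProduct] at hentry
  rw [hentry]
  split_ifs <;> simp

lemma IsOneParam.exists_eq_sum_zpow_smul {N : ℕ} {lam : ℂˣ →* SL N} (hlam : IsOneParam lam) :
    ∃ (s : Finset ℤ) (A : ℤ → Matrix (Fin (N + 1)) (Fin (N + 1)) ℂ),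
      ∀ t : ℂˣ, (lam t : Matrix (Fin (N + 1)) (Fin (N + 1)) ℂ) = ∑ k ∈ s, (t : ℂ) ^ k • A k := by
  choose c hc using hlam
  refine ⟨Finset.univ.biUnion fun p : Fin (N + 1) × Fin (N + 1) => (c p.1 p.2).support,
    fun k => Matrix.of fun i j => c i j k, fun t => ?_⟩
  ext i j
  have hsub : (c i j).support ⊆
      Finset.univ.biUnion fun p : Fin (N + 1) × Fin (N + 1) => (c p.1 p.2).support :=
    fun k hk => Finset.mem_biUnion.mpr ⟨(i, j), Finset.mem_univ _, hk⟩
  rw [hc i j t, Finset.sum_subset hsub fun k _ hk => by simp [Finsupp.notMem_support_iff.mp hk]]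
  simp [Matrix.sum_apply, mul_comm]

lemma IsOneParam.exists_mul_eq_mul_diagonal {N : ℕ} {lam : ℂˣ →* SL N} (hlam : IsOneParam lam) :
    ∃ (P : Matrix (Fin (N + 1)) (Fin (N + 1)) ℂ) (ℓ : Fin (N + 1) → ℤ), IsUnit P.det ∧
      ∀ t : ℂˣ, (lam t : Matrix (Fin (N + 1)) (Fin (N + 1)) ℂ) * P =
        P * diagonal fun i => (t : ℂ) ^ ℓ i := by
  obtain ⟨s, A, hA⟩ := hlam.exists_eq_sum_zpow_smul
  have hA' := MonoidHom.completeOrthogonalIdempotents_of_eq_sum_zpow_smul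
    (Matrix.SpecialLinearGroup.coeMonoidHom.comp lam) s A hA
  obtain ⟨P, κ, hP, hAP⟩ := Matrix.exists_mul_eq_mul_diagonal_of_completeOrthogonalIdempotents hA'
  refine ⟨P, fun i => κ i, hP, fun t => ?_⟩
  rw [hA, ← Finset.sum_attach s, Finset.sum_mul]
  simp only [Matrix.smul_mul, hAP, ← Matrix.mul_smul, ← Matrix.mul_sum]
  congr 1
  ext i j
  by_cases hij : i = j
  · subst hij
    simp [Matrix.sum_apply]
  · simp [Matrix.sum_apply, hij]

lemma Matrix.SpecialLinearGroup.exists_coe_eq_smul {n K : Type*} [Fintype n] [DecidableEq n]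
    [Nonempty n] [Field K] [IsAlgClosed K] {P : Matrix n n K} (hP : IsUnit P.det) :
    ∃ (g : Matrix.SpecialLinearGroup n K) (c : K), (g : Matrix n n K) = c • P := by
  obtain ⟨c, hc⟩ := IsAlgClosed.exists_pow_nat_eq P.det⁻¹ (Fintype.card_pos (α := n))
  exact ⟨⟨c • P, by rw [det_smul, hc, inv_mul_cancel₀ hP.ne_zero]⟩, c, rfl⟩

lemma coe_torusElem_zpow {N : ℕ} (ℓ : Fin N → ℤ) (t : ℂˣ) :
    (torusElem N (fun i => t ^ ℓ i) : Matrix (Fin (N + 1)) (Fin (N + 1)) ℂ) =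
      Matrix.diagonal fun i => (t : ℂ) ^ (Fin.snoc ℓ (-∑ i, ℓ i) : Fin (N + 1) → ℤ) i := by
  refine congrArg Matrix.diagonal (funext fun i => Fin.lastCases ?_ (fun i => ?_) i)
  · simp [prod_zpow_eq_zpow_sum₀ _ _ t.ne_zero]
  · simp

lemma IsOneParam.exists_eq_conj_torusElem {N : ℕ} {lam : ℂˣ →* SL N} (hlam : IsOneParam lam) :
    ∃ (g : SL N) (ℓ : Fin N → ℤ), ∀ t : ℂˣ, lam t = g * torusElem N (fun i => t ^ ℓ i) * g⁻¹ := by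
  obtain ⟨P, ℓ, hP, hlamP⟩ := hlam.exists_mul_eq_mul_diagonal
  obtain ⟨g, c, hg⟩ := Matrix.SpecialLinearGroup.exists_coe_eq_smul hP
  have hsum : ∑ i, ℓ i = 0 := two_zpow_injective <| by
    have hdet := congrArg det (hlamP (Units.mk0 2 two_ne_zero))
    rw [det_mul, det_mul, (lam _).2, one_mul, det_diagonal, Units.val_mk0,
      prod_zpow_eq_zpow_sum₀ _ _ two_ne_zero] at hdet
    show (2 : ℂ) ^ ∑ i, ℓ i = (2 : ℂ) ^ (0 : ℤ)
    rw [zpow_zero]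
    exact mul_right_injective₀ hP.ne_zero (hdet.symm.trans (mul_one _).symm)
  have hℓ : (Fin.snoc (Fin.init ℓ) (-∑ i, Fin.init ℓ i) : Fin (N + 1) → ℤ) = ℓ := by
    conv_rhs => rw [← Fin.snoc_init_self ℓ]
    rw [Fin.sum_univ_castSucc] at hsum
    simp only [Fin.init]
    congr 1
    omega
  refine ⟨g, Fin.init ℓ, fun t => eq_mul_inv_iff_mul_eq.mpr (Subtype.ext ?_)⟩
  rw [Matrix.SpecialLinearGroup.coe_mul, Matrix.SpecialLinearGroup.coe_mul, coe_torusElem_zpow,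
    hℓ, hg, Matrix.mul_smul, Matrix.smul_mul, hlamP]

instance : zeroFilter.NeBot := by
  rw [zeroFilter, comap_neBot_iff]
  intro U hU
  obtain ⟨x, hxU, hx0⟩ := Filter.nonempty_of_mem (inter_mem hU self_mem_nhdsWithin)
  exact ⟨Units.mk0 x hx0, hxU⟩

lemma tendsto_zpow_zeroFilter {n : ℤ} (hn : 0 < n) :
    Tendsto (fun t : ℂˣ => (t : ℂ) ^ n) zeroFilter (𝓝 0) := by
  have h := (continuousAt_zpow₀ (0 : ℂ) n (Or.inr hn.le)).tendsto
  rw [_root_.zero_zpow n hn.ne'] at h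
  exact h.comp (tendsto_comap.mono_right nhdsWithin_le_nhds)

lemma nonneg_of_tendsto_zpow_zeroFilter {n : ℤ} {c : ℂ}
    (h : Tendsto (fun t : ℂˣ => (t : ℂ) ^ n) zeroFilter (𝓝 c)) : 0 ≤ n := by
  by_contra! hn
  have h0 := (tendsto_zpow_zeroFilter (neg_pos.mpr hn)).mul h
  rw [zero_mul] at h0
  refine one_ne_zero (tendsto_nhds_unique (tendsto_const_nhds.congr fun t => ?_) h0)
  rw [← zpow_add₀ t.ne_zero, neg_add_cancel, zpow_zero]

lemma HasWeightI.le_of_conj_eq_diagonal {N : ℕ} {lam : ℂˣ → SL N} {w : ℤ} (h : HasWeightI lam w)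
    {g : SL N} {ℓ : Fin (N + 1) → ℤ}
    (hg : ∀ t, ((g⁻¹ * lam t * g : SL N) : Matrix (Fin (N + 1)) (Fin (N + 1)) ℂ) =
      Matrix.diagonal fun i => (t : ℂ) ^ ℓ i) (i : Fin (N + 1)) : w ≤ ℓ i := by
  obtain ⟨M₀, -, hM₀⟩ := h
  have hconj : Continuous fun M : Matrix (Fin (N + 1)) (Fin (N + 1)) ℂ =>
      ((g⁻¹ : SL N) : Matrix (Fin (N + 1)) (Fin (N + 1)) ℂ) * M * g :=
    (continuous_const.matrix_mul continuous_id).matrix_mul continuous_const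
  have hii := ((hconj.matrix_elem i i).tendsto M₀).comp hM₀
  refine sub_nonneg.mp (nonneg_of_tendsto_zpow_zeroFilter (hii.congr fun t => ?_))
  have := congrFun (congrFun (hg t) i) i
  simp only [Matrix.SpecialLinearGroup.coe_mul] at this
  rw [Function.comp_apply, Matrix.mul_smul, Matrix.smul_mul, Matrix.smul_apply, this,
    Matrix.diagonal_apply_eq, smul_eq_mul, ← zpow_add₀ t.ne_zero, neg_add_eq_sub]

lemma le_of_tendsto_zpow_smul_sum {M : Type*} [AddCommGroup M] [Module ℂ M] [TopologicalSpace M]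
    [T2Space M] [ContinuousAdd M] [ContinuousSMul ℂ M] {ι : Type*} (s : Finset ι) (e : ι → ℤ)
    (v : ι → M) {B w : ℤ} (hB : ∀ a ∈ s, v a ≠ 0 → B ≤ e a) {v₀ : M} (hv₀ : v₀ ≠ 0)
    (hlim : Tendsto (fun t : ℂˣ => (t : ℂ) ^ (-w) • ∑ a ∈ s, (t : ℂ) ^ e a • v a)
      zeroFilter (𝓝 v₀)) : B ≤ w := by
  by_contra! hwB
  have hterm : ∀ a ∈ s, Tendsto (fun t : ℂˣ => (t : ℂ) ^ (e a - w) • v a) zeroFilter (𝓝 0) := by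
    intro a ha
    by_cases hva : v a = 0
    · simp [hva]
    · simpa using (tendsto_zpow_zeroFilter (by linarith [hB a ha hva])).smul_const (v a)
  have hsum := tendsto_finsetSum s hterm
  rw [Finset.sum_const_zero] at hsum
  refine hv₀ (tendsto_nhds_unique hlim (hsum.congr fun t => ?_))
  rw [Finset.smul_sum]
  refine Finset.sum_congr rfl fun a _ => ?_
  rw [smul_smul, ← zpow_add₀ t.ne_zero, neg_add_eq_sub]

lemma IsWtDecomp.map_conj_torusElem {N : ℕ} {V : Type*} [NormedAddCommGroup V] [NormedSpace ℂ V]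
    {ρ : SL N →* (V ≃ₗ[ℂ] V)} {A : Finset (Fin N → ℤ)} {π : (Fin N → ℤ) → (V →ₗ[ℂ] V)}
    (hdec : IsWtDecomp ρ A π) (g : SL N) (ℓ : Fin N → ℤ) (t : ℂˣ) (u : V) :
    ρ (g * torusElem N (fun i => t ^ ℓ i) * g⁻¹) u =
      ∑ a ∈ A, (t : ℂ) ^ (∑ i, ℓ i * a i) • ρ g (π a (ρ g⁻¹ u)) := by
  rw [map_mul, map_mul, LinearEquiv.mul_apply, LinearEquiv.mul_apply]
  conv_lhs => rw [← hdec.1 (ρ g⁻¹ u)]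
  rw [map_sum, map_sum]
  refine Finset.sum_congr rfl fun a ha => ?_
  rw [hdec.2 a ha, map_smul, ← prod_zpow_eq_zpow_sum₀ _ _ t.ne_zero]
  simp_rw [Units.val_zpow_eq_zpow_val, ← _root_.zpow_mul]

lemma le_sum_mul_of_mem_simplexNI {N : ℕ} {ℓ : Fin N → ℝ} {m : ℝ} (hℓ : ∀ i, m ≤ ℓ i)
    (hsum : m ≤ -∑ i, ℓ i) {x : Fin N → ℝ} (hx : x ∈ simplexNI N) : m ≤ ∑ i, ℓ i * x i := by
  have hlin : IsLinearMap ℝ fun y : Fin N → ℝ => ∑ i, ℓ i * y i :=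
    ⟨fun y z => by simp [mul_add, Finset.sum_add_distrib],
      fun c y => by simp [Finset.mul_sum, mul_left_comm]⟩
  refine convexHull_min ?_ (convex_halfSpace_ge hlin m) hx
  rintro _ (rfl | ⟨j, rfl⟩)
  · simpa using hsum
  · simpa [Pi.single_apply] using hℓ j

lemma mul_le_sum_mul_of_mem_wtSupp {N : ℕ} {V : Type*} [AddCommGroup V] [Module ℂ V]
    {A : Finset (Fin N → ℤ)} {π : (Fin N → ℤ) → (V →ₗ[ℂ] V)} {u : V} {q : ℕ}
    (hq : wtPolytope A π u ⊆ (q : ℝ) • simplexNI N) {ℓ : Fin N → ℤ} {m : ℤ}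
    (hℓ : ∀ i, m ≤ ℓ i) (hsum : m ≤ -∑ i, ℓ i) {a : Fin N → ℤ} (ha : a ∈ wtSupp A π u) :
    q * m ≤ ∑ i, ℓ i * a i := by
  obtain ⟨x, hx, hax⟩ := hq (subset_convexHull ℝ _ (Set.mem_image_of_mem _ ha))
  have hx' := le_sum_mul_of_mem_simplexNI (ℓ := fun i => (ℓ i : ℝ)) (m := m)
    (fun i => by exact_mod_cast hℓ i) (by exact_mod_cast hsum) hx
  have hcast : ((q * m : ℤ) : ℝ) ≤ ((∑ i, ℓ i * a i : ℤ) : ℝ) := by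
    have ha_eq : ∀ i, (a i : ℝ) = q * x i := fun i => (congrFun hax i).symm
    push_cast
    simp_rw [ha_eq, mul_left_comm _ (q : ℝ), ← Finset.mul_sum]
    exact mul_le_mul_of_nonneg_left hx' q.cast_nonneg
  exact_mod_cast hcast

theorem statement3_general (N : ℕ) {V : Type} [NormedAddCommGroup V] [NormedSpace ℂ V]
    (ρ : SL N →* (V ≃ₗ[ℂ] V))
    (A : Finset (Fin N → ℤ)) (π : (Fin N → ℤ) → (V →ₗ[ℂ] V))
    (hdec : IsWtDecomp ρ A π)
    (q : ℕ)
    (hq : IsLeast {k : ℕ | 0 < k ∧ ∀ u : V, u ≠ 0 →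
      wtPolytope A π u ⊆ (k : ℝ) • simplexNI N} q)
    (lam : ℂˣ →* SL N) (hlam : IsOneParam lam)
    (u : V) (hu : u ≠ 0) (wI wu : ℤ)
    (hwI : HasWeightI (fun t => lam t) wI)
    (hwu : HasWeight ρ (fun t => lam t) u wu) :
    (q : ℤ) * wI ≤ wu := by
  obtain ⟨g, ℓ, hlam_eq⟩ := hlam.exists_eq_conj_torusElem
  have hwIℓ := hwI.le_of_conj_eq_diagonal (g := g) fun t => by
    rw [hlam_eq t, ← coe_torusElem_zpow, mul_assoc, mul_assoc, inv_mul_cancel, mul_one,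
      inv_mul_cancel_left]
  obtain ⟨v₀, hv₀, hlim⟩ := hwu
  refine le_of_tendsto_zpow_smul_sum A (fun a => ∑ i, ℓ i * a i) (fun a => ρ g (π a (ρ g⁻¹ u)))
    (fun a ha hne => ?_) hv₀ (hlim.congr fun t => by
      dsimp only
      rw [hlam_eq t, hdec.map_conj_torusElem])
  exact mul_le_sum_mul_of_mem_wtSupp (hq.1.2 _ ((ρ g⁻¹).map_ne_zero_iff.mpr hu))
    (fun i => by simpa using hwIℓ i.castSucc) (by simpa using hwIℓ (Fin.last N))
    ⟨ha, fun h => hne (by rw [h, map_zero])⟩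

/-- Let `V` be a rational representation of `G` with torus weight
decomposition `(A, π)`, and let `q` be the smallest positive integer `k` with
`N(u) ⊆ k · N(I)` for every nonzero `u ∈ V`. Then `q · w_λ(I) ≤ w_λ(u)` for every
one-parameter subgroup `λ` of `G` and every nonzero `u ∈ V`. -/
theorem statement3 (N : ℕ) (hN : 1 ≤ N) {V : Type} [NormedAddCommGroup V] [NormedSpace ℂ V]
    [FiniteDimensional ℂ V]
    (ρ : SL N →* (V ≃ₗ[ℂ] V)) (hρ : IsRational ρ)
    (A : Finset (Fin N → ℤ)) (π : (Fin N → ℤ) → (V →ₗ[ℂ] V))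
    (hdec : IsWtDecomp ρ A π)
    (q : ℕ)
    (hq : IsLeast {k : ℕ | 0 < k ∧ ∀ u : V, u ≠ 0 →
      wtPolytope A π u ⊆ (k : ℝ) • simplexNI N} q)
    (lam : ℂˣ →* SL N) (hlam : IsOneParam lam)
    (u : V) (hu : u ≠ 0) (wI wu : ℤ)
    (hwI : HasWeightI (fun t => lam t) wI)
    (hwu : HasWeight ρ (fun t => lam t) u wu) :
    (q : ℤ) * wI ≤ wu :=
  statement3_general N ρ A π hdec q hq lam hlam u hu wI wu hwI hwu
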